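/- Let X = {x ∈ ℝ³ : ‖x‖ = 1 and |x₃| ≤ 1/2} ∪ {x ∈ ℝ³ : x₁² + x₂² = 3/4 and |x₃| ≤ 1/2}, i.e. the 2-sphere S² with the two open polar caps removed, together with the cylinder joining the two resulting boundary circles through the interior. Then X, with the subspace topology of ℝ³, is homeomorphic to the torus S¹ × S¹. (This is 2-dimensional 0-surgery on S²: removing two discs S⁰ × D² around the poles and replacing them by the cylinder D¹ × S¹ changes the homeomorphism type from the 2-sphere to that of the torus.) -/

import Mathlib

/-!
Parametrise the torus `S¹ × S¹` by a profile circle `p = (a, b)` and an angle `q`. The profile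
circle is mapped onto the closed meridian curve `(r a, b / 2)` with `r a = √(3 + max a 0 ²) / 2`:
the half `a ≥ 0` runs along the spherical arc `r² + z² = 1`, the half `a ≤ 0` along the segment
`r = √3 / 2`. Revolving this curve about the third axis gives a continuous bijection from the
compact torus onto `SphereBand ∪ Cyl`, hence a homeomorphism.
-/

/-- The unit circle `S¹ = {x ∈ ℝ² : ‖x‖ = 1}`. -/
def S1 : Set (EuclideanSpace ℝ (Fin 2)) := Metric.sphere 0 1

/-- The 2-sphere with the two open polar caps removed:
`{x ∈ ℝ³ : ‖x‖ = 1 and |x₃| ≤ 1/2}`. -/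
def SphereBand : Set (EuclideanSpace ℝ (Fin 3)) :=
  {x | ‖x‖ = 1 ∧ |x 2| ≤ 1 / 2}

/-- The cylinder joining the two boundary circles through the interior:
`{x ∈ ℝ³ : x₁² + x₂² = 3/4 and |x₃| ≤ 1/2}`. -/
def Cyl : Set (EuclideanSpace ℝ (Fin 3)) :=
  {x | (x 0) ^ 2 + (x 1) ^ 2 = 3 / 4 ∧ |x 2| ≤ 1 / 2}

open Set Function

lemma mem_S1_iff (x : EuclideanSpace ℝ (Fin 2)) : x ∈ S1 ↔ x 0 ^ 2 + x 1 ^ 2 = 1 := by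
  rw [S1, mem_sphere_zero_iff_norm, EuclideanSpace.norm_eq, Real.sqrt_eq_one]
  simp only [Fin.sum_univ_two, Real.norm_eq_abs, sq_abs]

lemma norm_eq_one_iff_fin_three (x : EuclideanSpace ℝ (Fin 3)) :
    ‖x‖ = 1 ↔ x 0 ^ 2 + x 1 ^ 2 + x 2 ^ 2 = 1 := by
  rw [EuclideanSpace.norm_eq, Real.sqrt_eq_one]
  simp only [Fin.sum_univ_three, Real.norm_eq_abs, sq_abs]

lemma mk_mem_S1 {a b : ℝ} (h : a ^ 2 + b ^ 2 = 1) : !₂[a, b] ∈ S1 := by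
  simpa [mem_S1_iff] using h

section Revolution

variable {K : Type*} (ρ h : K → ℝ)

noncomputable def revolve (kq : K × S1) : EuclideanSpace ℝ (Fin 3) :=
  !₂[ρ kq.1 * kq.2.1 0, ρ kq.1 * kq.2.1 1, h kq.1]

variable {ρ h}

lemma continuous_revolve [TopologicalSpace K] (hρ : Continuous ρ) (hh : Continuous h) :
    Continuous (revolve ρ h) := by
  unfold revolve
  fun_prop

lemma sq_add_sq_revolve (kq : K × S1) :
    revolve ρ h kq 0 ^ 2 + revolve ρ h kq 1 ^ 2 = ρ kq.1 ^ 2 := by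
  have hq := (mem_S1_iff _).1 kq.2.2
  simp only [revolve, PiLp.toLp_apply, Matrix.cons_val_zero, Matrix.cons_val_one]
  linear_combination ρ kq.1 ^ 2 * hq

lemma revolve_injective (hρ : ∀ k, 0 < ρ k) (hprofile : Injective fun k => (ρ k, h k)) :
    Injective (revolve ρ h) := by
  rintro ⟨k, q⟩ ⟨k', q'⟩ hkq
  have hcoord (i : Fin 3) := congrArg (· i) hkq
  have hρsq : ρ k ^ 2 = ρ k' ^ 2 := by
    rw [← sq_add_sq_revolve (k, q), ← sq_add_sq_revolve (k', q'), hkq]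
  have hk : k = k' := hprofile <| Prod.ext
    ((pow_left_inj₀ (hρ k).le (hρ k').le two_ne_zero).1 hρsq) (by simpa [revolve] using hcoord 2)
  subst hk
  have hq (i : Fin 2) : q.1 i = q'.1 i := by
    have := hcoord i.castSucc
    fin_cases i <;> simpa [revolve, (hρ k).ne'] using this
  exact Prod.ext rfl (Subtype.ext (PiLp.ext hq))

lemma mem_range_revolve_iff (hρ : ∀ k, 0 < ρ k) {x : EuclideanSpace ℝ (Fin 3)} :
    x ∈ range (revolve ρ h) ↔ ∃ k, x 0 ^ 2 + x 1 ^ 2 = ρ k ^ 2 ∧ x 2 = h k := by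
  constructor
  · rintro ⟨kq, rfl⟩
    exact ⟨kq.1, sq_add_sq_revolve kq, rfl⟩
  · rintro ⟨k, hxy, hz⟩
    have hρk := (hρ k).ne'
    have hq : (x 0 / ρ k) ^ 2 + (x 1 / ρ k) ^ 2 = 1 := by
      rw [div_pow, div_pow, ← add_div, hxy, div_self (pow_ne_zero 2 hρk)]
    refine ⟨(k, ⟨_, mk_mem_S1 hq⟩), PiLp.ext fun i => ?_⟩
    fin_cases i <;> simp [revolve, hz, mul_div_cancel₀ _ hρk]

end Revolution

noncomputable def surgeryRadius (a : ℝ) : ℝ := √(3 + max a 0 ^ 2) / 2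

lemma surgeryRadius_sq (a : ℝ) : surgeryRadius a ^ 2 = (3 + max a 0 ^ 2) / 4 := by
  rw [surgeryRadius, div_pow, Real.sq_sqrt (by positivity)]
  norm_num

lemma surgeryRadius_pos (a : ℝ) : 0 < surgeryRadius a := by
  unfold surgeryRadius
  positivity

lemma continuous_surgeryRadius : Continuous surgeryRadius := by
  unfold surgeryRadius
  fun_prop

lemma eq_of_max_zero_eq_of_sq_eq {a b : ℝ} (hmax : max a 0 = max b 0) (hsq : a ^ 2 = b ^ 2) :
    a = b := by
  rcases le_total a 0 with ha | ha <;> rcases le_total b 0 with hb | hb <;>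
    simp only [max_eq_left, max_eq_right, ha, hb] at hmax <;> nlinarith

lemma surgeryProfile_injective :
    Injective fun p : S1 => (surgeryRadius (p.1 0), p.1 1 / 2) := by
  rintro ⟨p, hp⟩ ⟨p', hp'⟩ hpp'
  obtain ⟨hr, hb⟩ := Prod.ext_iff.1 hpp'
  rw [mem_S1_iff] at hp hp'
  have hb : p 1 = p' 1 := by simpa using hb
  have hmax : max (p 0) 0 = max (p' 0) 0 := by
    have hrsq := congrArg (· ^ 2) hr
    simp only [surgeryRadius_sq] at hrsq
    exact (pow_left_inj₀ (le_max_right _ _) (le_max_right _ _) two_ne_zero).1 (by linarith)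
  have ha : p 0 = p' 0 := eq_of_max_zero_eq_of_sq_eq hmax (by rw [hb] at hp; linarith)
  exact Subtype.ext (PiLp.ext fun i => by fin_cases i <;> assumption)

lemma mem_sphereBand_union_cyl_iff (x : EuclideanSpace ℝ (Fin 3)) :
    x ∈ SphereBand ∪ Cyl ↔
      ∃ p : S1, x 0 ^ 2 + x 1 ^ 2 = surgeryRadius (p.1 0) ^ 2 ∧ x 2 = p.1 1 / 2 := by
  constructor
  · intro hx
    have hz : |x 2| ≤ 1 / 2 := hx.elim (·.2) (·.2)
    have hz2 : 4 * x 2 ^ 2 ≤ 1 := by nlinarith [abs_le.1 hz]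
    set s := √(1 - 4 * x 2 ^ 2)
    have hs : s ^ 2 = 1 - 4 * x 2 ^ 2 := Real.sq_sqrt (by linarith)
    have hs0 : 0 ≤ s := Real.sqrt_nonneg _
    rcases hx with ⟨hn, -⟩ | ⟨hxy, -⟩
    · rw [norm_eq_one_iff_fin_three] at hn
      refine ⟨⟨_, mk_mem_S1 (a := s) (b := 2 * x 2) (by linarith)⟩, ?_, by simp⟩
      simp only [Matrix.cons_val_zero, surgeryRadius_sq, max_eq_left hs0]
      linarith
    · refine ⟨⟨_, mk_mem_S1 (a := -s) (b := 2 * x 2) (by linarith)⟩, ?_, by simp⟩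
      simp only [Matrix.cons_val_zero, surgeryRadius_sq, max_eq_right (neg_nonpos.2 hs0)]
      linarith
  · rintro ⟨⟨p, hp⟩, hxy, hz⟩
    rw [mem_S1_iff] at hp
    have hz' : |x 2| ≤ 1 / 2 := abs_le.2 ⟨by nlinarith, by nlinarith⟩
    rw [surgeryRadius_sq] at hxy
    rcases le_total 0 (p 0) with ha | ha
    · rw [max_eq_left ha] at hxy
      exact Or.inl ⟨(norm_eq_one_iff_fin_three x).2 (by rw [hz]; linarith), hz'⟩
    · rw [max_eq_right ha] at hxy
      exact Or.inr ⟨by linarith, hz'⟩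

/-- 2-dimensional 0-surgery on `S²`: removing the two polar discs and gluing in the
cylinder produces a space homeomorphic to the torus `S¹ × S¹`. -/
theorem two_dim_zero_surgery_on_sphere :
    Nonempty (↥(SphereBand ∪ Cyl) ≃ₜ (↥S1 × ↥S1)) := by
  have : CompactSpace S1 := isCompact_iff_compactSpace.1 (isCompact_sphere 0 1)
  set f := revolve (fun p : S1 => surgeryRadius (p.1 0)) (fun p => p.1 1 / 2)
  have hρ (p : S1) : 0 < surgeryRadius (p.1 0) := surgeryRadius_pos _
  have hcont : Continuous f :=
    continuous_revolve (continuous_surgeryRadius.comp (by fun_prop)) (by fun_prop)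
  have hemb : Topology.IsEmbedding f :=
    (hcont.isClosedEmbedding (revolve_injective hρ surgeryProfile_injective)).isEmbedding
  have hrange : range f = SphereBand ∪ Cyl := by
    ext x
    rw [mem_range_revolve_iff hρ, mem_sphereBand_union_cyl_iff]
  exact ⟨(hemb.toHomeomorph.trans (Homeomorph.setCongr hrange)).symm⟩
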